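/- arXiv:1909.09336 — 2 statements merged into one kernel-verified Lean document; each statement's English description precedes it below -/
import Mathlib

section
/- Finite mixtures of two-dimensional product-Poisson distributions are identifiable: if G and G' are probability measures on (0,∞)² (each supported on finitely many points) such that ∫ Poisson(ξ₁)(w₁)·Poisson(ξ₂)(w₂) dG(ξ₁,ξ₂) = ∫ Poisson(ξ₁)(w₁)·Poisson(ξ₂)(w₂) dG'(ξ₁,ξ₂) for all (w₁,w₂) ∈ ℕ², then G = G'. -/
open MeasureTheory

/-- Poisson pmf with rate `r` evaluated at `w`. -/
noncomputable def poissonPdf (r : ℝ) (w : ℕ) : ℝ :=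
  Real.exp (-r) * r ^ w / (Nat.factorial w)

/-!
Both mixtures live on a common finite set `t` of rate pairs, so the hypothesis says that
`∑ p ∈ t, (G{p} - G'{p}) · P_p = 0`, where `P_p` is the product-Poisson pmf of `p`.
Up to the nonzero factor `e^{-(p₁+p₂)} / (w₁! w₂!)`, `P_p(w₁, w₂)` is the value of the
character `(w₁, w₂) ↦ p₁^w₁ p₂^w₂` of the monoid `ℕ × ℕ`; distinct pairs give distinct
characters, and distinct characters are linearly independent (Dedekind). Hence
`G{p} = G'{p}` on `t`, and a measure carried by `t` is determined by these point masses.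
-/

section Characters

variable {K : Type*} [CommRing K]

def pairPowHom (p : K × K) : Multiplicative (ℕ × ℕ) →* K where
  toFun w := p.1 ^ w.toAdd.1 * p.2 ^ w.toAdd.2
  map_one' := by simp
  map_mul' v w := by simp only [toAdd_mul, Prod.fst_add, Prod.snd_add, pow_add]; ring

theorem pairPowHom_apply (p : K × K) (w : Multiplicative (ℕ × ℕ)) :
    pairPowHom p w = p.1 ^ w.toAdd.1 * p.2 ^ w.toAdd.2 :=
  rfl

theorem pairPowHom_injective : Function.Injective (pairPowHom (K := K)) := by
  intro p q h
  have h₁ := DFunLike.congr_fun h (Multiplicative.ofAdd (1, 0))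
  have h₂ := DFunLike.congr_fun h (Multiplicative.ofAdd (0, 1))
  simp only [pairPowHom_apply, toAdd_ofAdd, pow_one, pow_zero, mul_one, one_mul] at h₁ h₂
  exact Prod.ext h₁ h₂

theorem Finset.eq_zero_of_sum_mul_pow_mul_pow_eq_zero [IsDomain K] {t : Finset (K × K)}
    {c : K × K → K} (h : ∀ m n : ℕ, ∑ p ∈ t, c p * (p.1 ^ m * p.2 ^ n) = 0) :
    ∀ p ∈ t, c p = 0 := by
  have hli : LinearIndependent K fun p : K × K => (pairPowHom p : Multiplicative (ℕ × ℕ) → K) :=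
    (linearIndependent_monoidHom _ K).comp _ pairPowHom_injective
  refine linearIndependent_iff'.mp hli t c (funext fun w => ?_)
  simpa [pairPowHom_apply] using h w.toAdd.1 w.toAdd.2

end Characters

theorem poissonPdf_mul_poissonPdf (a b : ℝ) (m n : ℕ) :
    poissonPdf a m * poissonPdf b n
      = Real.exp (-(a + b)) / (m.factorial * n.factorial) * (a ^ m * b ^ n) := by
  rw [poissonPdf, poissonPdf, neg_add, Real.exp_add]
  ring

theorem eq_zero_of_sum_mul_poissonPdf_mul_poissonPdf_eq_zero {t : Finset (ℝ × ℝ)}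
    {c : ℝ × ℝ → ℝ} (h : ∀ m n : ℕ, ∑ p ∈ t, c p * (poissonPdf p.1 m * poissonPdf p.2 n) = 0) :
    ∀ p ∈ t, c p = 0 := by
  have hpow : ∀ m n : ℕ,
      ∑ p ∈ t, c p * Real.exp (-(p.1 + p.2)) * (p.1 ^ m * p.2 ^ n) = 0 := by
    intro m n
    have hfac : (m.factorial * n.factorial : ℝ) ≠ 0 := by positivity
    have := h m n
    simp_rw [poissonPdf_mul_poissonPdf, div_mul_eq_mul_div, mul_div_assoc',
      ← Finset.sum_div, div_eq_zero_iff, hfac, or_false] at this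
    simpa only [mul_assoc] using this
  intro p hp
  simpa [Real.exp_ne_zero] using
    Finset.eq_zero_of_sum_mul_pow_mul_pow_eq_zero hpow p hp

theorem MeasureTheory.integral_eq_sum_of_ae_mem_finset {α : Type*} [MeasurableSpace α]
    [MeasurableSingletonClass α] {μ : Measure α} [IsFiniteMeasure μ] {t : Finset α}
    (ht : ∀ᵐ x ∂μ, x ∈ t) (f : α → ℝ) :
    ∫ x, f x ∂μ = ∑ p ∈ t, μ.real {p} * f p := by
  calc ∫ x, f x ∂μ = ∫ x in t, f x ∂μ := by rw [Measure.restrict_eq_self_of_ae_mem ht]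
    _ = ∑ p ∈ t, μ.real {p} * f p := setIntegral_finset t IntegrableOn.finset

theorem product_poisson_mixture_identifiable_general
    (G G' : Measure (ℝ × ℝ)) [IsProbabilityMeasure G] [IsProbabilityMeasure G']
    (hGfin : ∃ s : Finset (ℝ × ℝ), G (↑s)ᶜ = 0)
    (hG'fin : ∃ s : Finset (ℝ × ℝ), G' (↑s)ᶜ = 0)
    (hmix : ∀ w₁ w₂ : ℕ,
      ∫ ξ, poissonPdf ξ.1 w₁ * poissonPdf ξ.2 w₂ ∂G
        = ∫ ξ, poissonPdf ξ.1 w₁ * poissonPdf ξ.2 w₂ ∂G') :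
    G = G' := by
  obtain ⟨s, hs⟩ := hGfin
  obtain ⟨s', hs'⟩ := hG'fin
  have hG : ∀ᵐ ξ ∂G, ξ ∈ s ∪ s' := (ae_iff.mpr hs).mono fun _ => Finset.mem_union_left _
  have hG' : ∀ᵐ ξ ∂G', ξ ∈ s ∪ s' := (ae_iff.mpr hs').mono fun _ => Finset.mem_union_right _
  have hpoint : ∀ p ∈ s ∪ s', G.real {p} - G'.real {p} = 0 := by
    refine eq_zero_of_sum_mul_poissonPdf_mul_poissonPdf_eq_zero fun m n => ?_
    simp_rw [sub_mul, Finset.sum_sub_distrib, ← integral_eq_sum_of_ae_mem_finset hG,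
      ← integral_eq_sum_of_ae_mem_finset hG', hmix, sub_self]
  rw [Measure.ae_mem_finset_iff.mp hG, Measure.ae_mem_finset_iff.mp hG']
  refine Finset.sum_congr rfl fun p hp => ?_
  rw [(measureReal_eq_measureReal_iff).mp (sub_eq_zero.mp (hpoint p hp))]

/-- Finite mixtures of two-dimensional product-Poisson distributions are
identifiable: if two finitely supported probability measures `G, G'` on
`(0,∞)²` induce the same mixed product-Poisson distribution on `ℕ²`,
then `G = G'`. -/
theorem product_poisson_mixture_identifiable
    (G G' : Measure (ℝ × ℝ)) [IsProbabilityMeasure G] [IsProbabilityMeasure G']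
    (hGfin : ∃ s : Finset (ℝ × ℝ), G (↑s)ᶜ = 0)
    (hG'fin : ∃ s : Finset (ℝ × ℝ), G' (↑s)ᶜ = 0)
    (hGsupp : G {ξ | ¬ (0 < ξ.1 ∧ 0 < ξ.2)} = 0)
    (hG'supp : G' {ξ | ¬ (0 < ξ.1 ∧ 0 < ξ.2)} = 0)
    (hmix : ∀ w₁ w₂ : ℕ,
      ∫ ξ, poissonPdf ξ.1 w₁ * poissonPdf ξ.2 w₂ ∂G
        = ∫ ξ, poissonPdf ξ.1 w₁ * poissonPdf ξ.2 w₂ ∂G') :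
    G = G' :=
  product_poisson_mixture_identifiable_general G G' hGfin hG'fin hmix
end

section
/- Let (ξ₁, ξ₂) have distribution G on [0,M]² with G({ξ₁+ξ₂ = 0}) = 0, and let Ĝₙ be probability measures on [0,M]² converging weakly to G. Define ψ_ε(ξ₁,ξ₂) = (ξ₁/(ξ₁+ξ₂))·1{ξ₁+ξ₂ > ε}. Then lim_{ε→0} E_G ψ_ε = E_G[ξ₁/(ξ₁+ξ₂)] and, for each ε > 0 with G({ξ₁+ξ₂ = ε}) = 0, E_{Ĝₙ} ψ_ε → E_G ψ_ε. -/
open MeasureTheory Filter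
open scoped Topology

/-!
Part one is dominated convergence: `ψ_ε` increases to `ξ₁/(ξ₁+ξ₂)` on `{ξ₁+ξ₂ > 0}`, which
carries all of `G`, and it is bounded by `1` on the square. For part two, on the square
`ψ_ε = 1_U · r` with `U = {ξ₁+ξ₂ > ε}` open and `r` bounded continuous. Since `G(∂U) = 0`,
thickened indicators of `closure U` and of `closure Uᶜ` squeeze `1_U` between bounded continuous
functions whose `G`-integrals differ arbitrarily little, and weak convergence passes through
such a sandwich.
-/

open Set BoundedContinuousFunction
open scoped NNReal

variable {Ω ι : Type*} [MeasurableSpace Ω] {L : Filter ι}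

theorem tendsto_integral_indicator_lt_nhdsGT {μ : Measure Ω} {s g : Ω → ℝ} (hs : Measurable s)
    (hs_pos : ∀ᵐ x ∂μ, 0 < s x) (hg : Integrable g μ) :
    Tendsto (fun ε => ∫ x, {x | ε < s x}.indicator g x ∂μ) (𝓝[>] 0) (𝓝 (∫ x, g x ∂μ)) := by
  refine tendsto_integral_filter_of_dominated_convergence (fun x => ‖g x‖)
    (.of_forall fun ε => hg.aestronglyMeasurable.indicator (measurableSet_lt measurable_const hs))
    (.of_forall fun ε => .of_forall fun x => norm_indicator_le_norm_self g x) hg.norm ?_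
  filter_upwards [hs_pos] with x hx
  refine tendsto_const_nhds.congr' ?_
  filter_upwards [nhdsWithin_le_nhds (gt_mem_nhds hx)] with ε hε
  exact (indicator_of_mem (show x ∈ {x | ε < s x} from hε) g).symm

theorem tendsto_integral_of_forall_boundedContinuous_sandwich [TopologicalSpace Ω]
    [OpensMeasurableSpace Ω] {μs : ι → ProbabilityMeasure Ω} {μ : ProbabilityMeasure Ω}
    (hμs : Tendsto μs L (𝓝 μ)) {f : Ω → ℝ} (hf : Measurable f)
    (happrox : ∀ η > 0, ∃ l u : Ω →ᵇ ℝ, (∀ x, l x ≤ f x ∧ f x ≤ u x) ∧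
      ∫ x, (u x - l x) ∂(μ : Measure Ω) < η) :
    Tendsto (fun i => ∫ x, f x ∂(μs i : Measure Ω)) L (𝓝 (∫ x, f x ∂(μ : Measure Ω))) := by
  have hf_int : ∀ ν : ProbabilityMeasure Ω, Integrable f ν := by
    obtain ⟨l, u, hlu, -⟩ := happrox 1 one_pos
    refine fun ν => .of_bound hf.aestronglyMeasurable (max ‖l‖ ‖u‖) (.of_forall fun x => ?_)
    exact (abs_le_max_abs_abs (hlu x).1 (hlu x).2).trans
      (max_le_max (l.norm_coe_le_norm x) (u.norm_coe_le_norm x))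
  have integral_sandwich : ∀ l u : Ω →ᵇ ℝ, (∀ x, l x ≤ f x ∧ f x ≤ u x) →
      ∀ ν : ProbabilityMeasure Ω, ∫ x, l x ∂(ν : Measure Ω) ≤ ∫ x, f x ∂(ν : Measure Ω) ∧
        ∫ x, f x ∂(ν : Measure Ω) ≤ ∫ x, u x ∂(ν : Measure Ω) := fun l u hlu ν =>
    ⟨integral_mono (l.integrable _) (hf_int ν) fun x => (hlu x).1,
      integral_mono (hf_int ν) (u.integrable _) fun x => (hlu x).2⟩
  have hconv := ProbabilityMeasure.tendsto_iff_forall_integral_tendsto.mp hμs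
  refine tendsto_order.2 ⟨fun a ha => ?_, fun b hb => ?_⟩
  · obtain ⟨l, u, hlu, hη⟩ := happrox _ (sub_pos.2 ha)
    rw [integral_sub (u.integrable _) (l.integrable _)] at hη
    have hl : a < ∫ x, l x ∂(μ : Measure Ω) := by linarith [(integral_sandwich l u hlu μ).2]
    filter_upwards [(hconv l).eventually_const_lt hl] with i hi
    exact hi.trans_le (integral_sandwich l u hlu (μs i)).1
  · obtain ⟨l, u, hlu, hη⟩ := happrox _ (sub_pos.2 hb)
    rw [integral_sub (u.integrable _) (l.integrable _)] at hη
    have hu : ∫ x, u x ∂(μ : Measure Ω) < b := by linarith [(integral_sandwich l u hlu μ).1]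
    filter_upwards [(hconv u).eventually_lt_const hu] with i hi
    exact (integral_sandwich l u hlu (μs i)).2.trans_lt hi

theorem exists_boundedContinuous_le_indicator_le_of_null_frontier [PseudoEMetricSpace Ω]
    [OpensMeasurableSpace Ω] (μ : Measure Ω) [IsFiniteMeasure μ] {U : Set Ω}
    (hU : μ (frontier U) = 0) {η : ℝ} (hη : 0 < η) :
    ∃ l u : Ω →ᵇ ℝ, (∀ x, l x ≤ U.indicator 1 x ∧ U.indicator 1 x ≤ u x) ∧
      ∫ x, (u x - l x) ∂μ < η := by
  have hδ : ∀ n : ℕ, (0 : ℝ) < 1 / (n + 1) := fun n => Nat.one_div_pos_of_nat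
  let toReal : (Ω →ᵇ ℝ≥0) → Ω →ᵇ ℝ := comp _ (LipschitzWith.subtype_val (Ici (0 : ℝ)))
  let a n := toReal (thickenedIndicator (hδ n) (closure U))
  let b n := toReal (thickenedIndicator (hδ n) (closure Uᶜ))
  have hfrontier : μ.real (closure U) + μ.real (closure Uᶜ) - μ.real univ = 0 := by
    rw [← measureReal_union_add_inter isClosed_closure.measurableSet,
      ← frontier_eq_closure_inter_closure, measureReal_def μ (frontier U), hU,
      ENNReal.toReal_zero, add_zero, ← closure_union, union_compl_self, closure_univ, sub_self]
  have hgap : Tendsto (fun n => ∫ x, (a n x - (1 - b n x)) ∂μ) atTop (𝓝 0) := by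
    have ha := tendsto_integral_thickenedIndicator_of_isClosed μ isClosed_closure hδ
      tendsto_one_div_add_atTop_nhds_zero_nat (F := closure U)
    have hb := tendsto_integral_thickenedIndicator_of_isClosed μ isClosed_closure hδ
      tendsto_one_div_add_atTop_nhds_zero_nat (F := closure Uᶜ)
    rw [← hfrontier]
    refine ((ha.add hb).sub_const _).congr fun n => ?_
    have ia : Integrable (a n) μ := integrable_thickenedIndicator _ _
    have ib : Integrable (b n) μ := integrable_thickenedIndicator _ _
    have : ∫ x, (a n x - (1 - b n x)) ∂μ = ∫ x, (a n x + b n x) ∂μ - ∫ _, (1 : ℝ) ∂μ := by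
      rw [← integral_sub (f := fun x => a n x + b n x) (ia.add ib) (integrable_const 1)]
      congr 1 with x
      ring
    rw [this, integral_add ia ib, integral_const, smul_eq_mul, mul_one]
    rfl
  obtain ⟨n, hn⟩ := (hgap.eventually (gt_mem_nhds hη)).exists
  refine ⟨1 - b n, a n, fun x => ?_, by simpa using hn⟩
  have ha0 : (0 : ℝ) ≤ a n x := NNReal.coe_nonneg _
  have hb0 : (0 : ℝ) ≤ b n x := NNReal.coe_nonneg _
  by_cases hx : x ∈ U
  · have ha1 : a n x = 1 := congrArg NNReal.toReal (thickenedIndicator_one _ _ (subset_closure hx))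
    simp [hx, ha1, hb0]
  · have hb1 : b n x = 1 :=
      congrArg NNReal.toReal (thickenedIndicator_one _ _ (subset_closure (mem_compl hx)))
    simp [hx, hb1, ha0]

theorem tendsto_integral_indicator_of_null_frontier [PseudoEMetricSpace Ω]
    [OpensMeasurableSpace Ω] {μs : ι → ProbabilityMeasure Ω} {μ : ProbabilityMeasure Ω}
    (hμs : Tendsto μs L (𝓝 μ)) (r : Ω →ᵇ ℝ) {U : Set Ω}
    (hU : MeasurableSet U) (hUμ : (μ : Measure Ω) (frontier U) = 0) :
    Tendsto (fun i => ∫ x, U.indicator r x ∂(μs i : Measure Ω)) L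
      (𝓝 (∫ x, U.indicator r x ∂(μ : Measure Ω))) := by
  refine tendsto_integral_of_forall_boundedContinuous_sandwich hμs
    (r.continuous.measurable.indicator hU) fun η hη => ?_
  set C := ‖r‖
  obtain ⟨l, u, hlu, hgap⟩ := exists_boundedContinuous_le_indicator_le_of_null_frontier
    (μ : Measure Ω) hUμ (show 0 < η / (2 * C + 1) by positivity)
  have hdev : ∀ x, |U.indicator r x - r x * l x| ≤ C * (u x - l x) := by
    intro x
    have hmul : U.indicator r x = r x * U.indicator 1 x := by by_cases hx : x ∈ U <;> simp [hx]
    rw [hmul, ← mul_sub, abs_mul, abs_of_nonneg (sub_nonneg.2 (hlu x).1)]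
    exact mul_le_mul (r.norm_coe_le_norm x) (by linarith [hlu x]) (sub_nonneg.2 (hlu x).1)
      (norm_nonneg r)
  refine ⟨r * l - C • (u - l), r * l + C • (u - l), fun x => ?_, ?_⟩
  · simp only [coe_sub, coe_add, coe_mul, coe_smul, Pi.sub_apply, Pi.add_apply, Pi.mul_apply,
      smul_eq_mul]
    constructor <;> linarith [abs_le.1 (hdev x)]
  · have hwidth : ∫ x, ((r * l + C • (u - l)) x - (r * l - C • (u - l)) x) ∂(μ : Measure Ω)
        = 2 * C * ∫ x, (u x - l x) ∂(μ : Measure Ω) := by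
      rw [← integral_const_mul]
      congr 1 with x
      simp only [coe_sub, coe_add, coe_mul, coe_smul, Pi.sub_apply, Pi.add_apply, Pi.mul_apply,
        smul_eq_mul]
      ring
    have hnonneg : 0 ≤ ∫ x, (u x - l x) ∂(μ : Measure Ω) :=
      integral_nonneg fun x => sub_nonneg.2 ((hlu x).1.trans (hlu x).2)
    rw [hwidth]
    rw [lt_div_iff₀ (by positivity)] at hgap
    nlinarith [norm_nonneg r]

theorem div_add_mem_Icc {a b : ℝ} (ha : 0 ≤ a) (hb : 0 ≤ b) : a / (a + b) ∈ Icc (0 : ℝ) 1 :=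
  ⟨div_nonneg ha (add_nonneg ha hb),
    div_le_one_of_le₀ (le_add_of_nonneg_right hb) (add_nonneg ha hb)⟩

theorem exists_boundedContinuous_eq_div_add {ε : ℝ} (hε : 0 < ε) :
    ∃ r : ℝ × ℝ →ᵇ ℝ, ∀ ξ : ℝ × ℝ, 0 ≤ ξ.1 → 0 ≤ ξ.2 → ε < ξ.1 + ξ.2 →
      r ξ = ξ.1 / (ξ.1 + ξ.2) := by
  have hcont : Continuous fun ξ : ℝ × ℝ => ξ.1 / max (ξ.1 + ξ.2) ε :=
    continuous_fst.div (by fun_prop) fun ξ => (hε.trans_le (le_max_right _ _)).ne'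
  refine ⟨ofNormedAddCommGroup (fun ξ => max 0 (min 1 (ξ.1 / max (ξ.1 + ξ.2) ε)))
    (continuous_const.max (continuous_const.min hcont)) 1 fun ξ => ?_, fun ξ h1 h2 hε' => ?_⟩
  · rw [Real.norm_eq_abs, abs_le]
    exact ⟨by linarith [le_max_left 0 (min 1 (ξ.1 / max (ξ.1 + ξ.2) ε))],
      max_le zero_le_one (min_le_left _ _)⟩
  · have h := div_add_mem_Icc h1 h2
    simp only [ofNormedAddCommGroup, coe_mk, max_eq_left hε'.le,
      min_eq_right h.2, max_eq_right h.1]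

theorem integrable_div_add {ν : Measure (ℝ × ℝ)} [IsFiniteMeasure ν]
    (h : ∀ᵐ ξ ∂ν, 0 ≤ ξ.1 ∧ 0 ≤ ξ.2) : Integrable (fun ξ : ℝ × ℝ => ξ.1 / (ξ.1 + ξ.2)) ν := by
  refine .of_bound (measurable_fst.div (by fun_prop)).aestronglyMeasurable 1 ?_
  filter_upwards [h] with ξ hξ
  have hmem := div_add_mem_Icc hξ.1 hξ.2
  rw [Real.norm_eq_abs, abs_le]
  exact ⟨by linarith [hmem.1], hmem.2⟩

theorem exists_boundedContinuous_integral_indicator_div_add_eq {ε : ℝ} (hε : 0 < ε) :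
    ∃ r : ℝ × ℝ →ᵇ ℝ, ∀ ν : Measure (ℝ × ℝ), (∀ᵐ ξ ∂ν, 0 ≤ ξ.1 ∧ 0 ≤ ξ.2) →
      ∫ ξ, {ξ : ℝ × ℝ | ε < ξ.1 + ξ.2}.indicator (fun ξ => ξ.1 / (ξ.1 + ξ.2)) ξ ∂ν =
        ∫ ξ, {ξ : ℝ × ℝ | ε < ξ.1 + ξ.2}.indicator r ξ ∂ν := by
  obtain ⟨r, hr⟩ := exists_boundedContinuous_eq_div_add hε
  refine ⟨r, fun ν hν => integral_congr_ae ?_⟩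
  filter_upwards [hν] with ξ hξ
  by_cases hξU : ε < ξ.1 + ξ.2
  · simp only [indicator_of_mem (show ξ ∈ {ξ : ℝ × ℝ | ε < ξ.1 + ξ.2} from hξU),
      hr ξ hξ.1 hξ.2 hξU]
  · simp only [indicator_of_notMem (show ξ ∉ {ξ : ℝ × ℝ | ε < ξ.1 + ξ.2} from hξU)]

theorem gmle_plugin_consistency_general
    (M : ℝ)
    (G : ProbabilityMeasure (ℝ × ℝ)) (Ghat : ℕ → ProbabilityMeasure (ℝ × ℝ))
    (hGsupp : (G : Measure (ℝ × ℝ)) (Set.Icc 0 M ×ˢ Set.Icc 0 M)ᶜ = 0)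
    (hGhatsupp : ∀ n, (Ghat n : Measure (ℝ × ℝ)) (Set.Icc 0 M ×ˢ Set.Icc 0 M)ᶜ = 0)
    (hzero : (G : Measure (ℝ × ℝ)) {ξ | ξ.1 + ξ.2 = 0} = 0)
    (hconv : Tendsto Ghat atTop (𝓝 G))
    (ψ : ℝ → ℝ × ℝ → ℝ)
    (hψ : ∀ ε ξ, ψ ε ξ = if ε < ξ.1 + ξ.2 then ξ.1 / (ξ.1 + ξ.2) else 0) :
    Tendsto (fun ε => ∫ ξ, ψ ε ξ ∂(G : Measure (ℝ × ℝ))) (𝓝[>] (0 : ℝ))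
        (𝓝 (∫ ξ, ξ.1 / (ξ.1 + ξ.2) ∂(G : Measure (ℝ × ℝ))))
      ∧ ∀ ε : ℝ, 0 < ε → (G : Measure (ℝ × ℝ)) {ξ | ξ.1 + ξ.2 = ε} = 0 →
          Tendsto (fun n => ∫ ξ, ψ ε ξ ∂(Ghat n : Measure (ℝ × ℝ))) atTop
            (𝓝 (∫ ξ, ψ ε ξ ∂(G : Measure (ℝ × ℝ)))) := by
  have hquadrant : ∀ ν : Measure (ℝ × ℝ), ν (Icc 0 M ×ˢ Icc 0 M)ᶜ = 0 →
      ∀ᵐ ξ ∂ν, 0 ≤ ξ.1 ∧ 0 ≤ ξ.2 := fun ν hν => by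
    filter_upwards [mem_ae_iff.mpr hν] with ξ hξ using ⟨hξ.1.1, hξ.2.1⟩
  have hψU : ∀ ε, ψ ε = {ξ : ℝ × ℝ | ε < ξ.1 + ξ.2}.indicator fun ξ => ξ.1 / (ξ.1 + ξ.2) :=
    fun ε => funext fun ξ => by simp [hψ, Set.indicator_apply]
  simp only [hψU]
  refine ⟨tendsto_integral_indicator_lt_nhdsGT (by fun_prop) ?_
    (integrable_div_add (hquadrant _ hGsupp)), fun ε hε hεG => ?_⟩
  · filter_upwards [hquadrant _ hGsupp, measure_eq_zero_iff_ae_notMem.1 hzero] with ξ hξ hne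
    exact (add_nonneg hξ.1 hξ.2).lt_of_ne (Ne.symm hne)
  · obtain ⟨r, hr⟩ := exists_boundedContinuous_integral_indicator_div_add_eq hε
    have hfrontier : (G : Measure (ℝ × ℝ)) (frontier {ξ : ℝ × ℝ | ε < ξ.1 + ξ.2}) = 0 :=
      measure_mono_null ((frontier_lt_subset_eq continuous_const (by fun_prop)).trans
        fun ξ hξ => hξ.symm) hεG
    rw [hr _ (hquadrant _ hGsupp)]
    exact (tendsto_integral_indicator_of_null_frontier hconv r
      (measurableSet_lt measurable_const (by fun_prop)) hfrontier).congr
      fun n => (hr _ (hquadrant _ (hGhatsupp n))).symm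

/-- Corollary to Theorem 1: with `ψ_ε(ξ₁,ξ₂) = (ξ₁/(ξ₁+ξ₂))·1{ξ₁+ξ₂ > ε}`,
if `G` is supported on `[0,M]²` with `G({ξ₁+ξ₂ = 0}) = 0` and `Ĝₙ → G` weakly
(all supported on `[0,M]²`), then `E_G ψ_ε → E_G[ξ₁/(ξ₁+ξ₂)]` as `ε → 0⁺`, and
for each `ε > 0` with `G({ξ₁+ξ₂ = ε}) = 0`, `E_{Ĝₙ} ψ_ε → E_G ψ_ε`. -/
theorem gmle_plugin_consistency
    (M : ℝ) (hM : 0 < M)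
    (G : ProbabilityMeasure (ℝ × ℝ)) (Ghat : ℕ → ProbabilityMeasure (ℝ × ℝ))
    (hGsupp : (G : Measure (ℝ × ℝ)) (Set.Icc 0 M ×ˢ Set.Icc 0 M)ᶜ = 0)
    (hGhatsupp : ∀ n, (Ghat n : Measure (ℝ × ℝ)) (Set.Icc 0 M ×ˢ Set.Icc 0 M)ᶜ = 0)
    (hzero : (G : Measure (ℝ × ℝ)) {ξ | ξ.1 + ξ.2 = 0} = 0)
    (hconv : Tendsto Ghat atTop (𝓝 G))
    (ψ : ℝ → ℝ × ℝ → ℝ)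
    (hψ : ∀ ε ξ, ψ ε ξ = if ε < ξ.1 + ξ.2 then ξ.1 / (ξ.1 + ξ.2) else 0) :
    Tendsto (fun ε => ∫ ξ, ψ ε ξ ∂(G : Measure (ℝ × ℝ))) (𝓝[>] (0 : ℝ))
        (𝓝 (∫ ξ, ξ.1 / (ξ.1 + ξ.2) ∂(G : Measure (ℝ × ℝ))))
      ∧ ∀ ε : ℝ, 0 < ε → (G : Measure (ℝ × ℝ)) {ξ | ξ.1 + ξ.2 = ε} = 0 →
          Tendsto (fun n => ∫ ξ, ψ ε ξ ∂(Ghat n : Measure (ℝ × ℝ))) atTop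
            (𝓝 (∫ ξ, ψ ε ξ ∂(G : Measure (ℝ × ℝ)))) :=
  gmle_plugin_consistency_general M G Ghat hGsupp hGhatsupp hzero hconv ψ hψ
end
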